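/- arXiv:math/0006214 — 3 statements merged into one kernel-verified Lean document; each statement's English description precedes it below -/
import Mathlib

section
/- If Y dominates X, i.e. there exist continuous maps f : X → Y and g : Y → X with g ∘ f homotopic to id_X, then for every open set U ⊆ Y contractible in Y, the preimage f⁻¹(U) is an open subset of X contractible in X. -/
open Set

def ContractibleIn {X : Type*} [TopologicalSpace X] (A : Set X) : Prop :=
  ∃ c : X, (⟨Subtype.val, continuous_subtype_val⟩ : C(A, X)).Homotopic (ContinuousMap.const A c)

/-!
The inclusion of `f ⁻¹' U` into `X` is homotopic to its composite with `g ∘ f`, which factors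
through the inclusion of `U` into `Y`; the latter is nullhomotopic, hence so is the composite.
-/

namespace ContinuousMap

variable {X Y : Type*} [TopologicalSpace X] [TopologicalSpace Y]

theorem Nullhomotopic.of_homotopic {f₀ f₁ : C(X, Y)} (h : f₀.Homotopic f₁)
    (hf₁ : f₁.Nullhomotopic) : f₀.Nullhomotopic :=
  hf₁.imp fun _ => h.trans

end ContinuousMap

section

variable {X Y : Type*} [TopologicalSpace X] [TopologicalSpace Y]

theorem contractibleIn_iff_nullhomotopic (A : Set X) :
    ContractibleIn A ↔ (⟨Subtype.val, continuous_subtype_val⟩ : C(A, X)).Nullhomotopic :=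
  Iff.rfl

theorem ContractibleIn.preimage_of_comp_homotopic_id {f : C(X, Y)} {g : C(Y, X)}
    (hgf : (g.comp f).Homotopic (ContinuousMap.id X)) {U : Set Y} (hU : ContractibleIn U) :
    ContractibleIn (f ⁻¹' U) := by
  rw [contractibleIn_iff_nullhomotopic] at hU ⊢
  set ι : C(f ⁻¹' U, X) := ⟨Subtype.val, continuous_subtype_val⟩
  have hι : ((g.comp f).comp ι).Homotopic ι := by
    simpa only [ContinuousMap.id_comp] using hgf.comp (.refl ι)
  have hfactor : (g.comp f).comp ι =
      (g.comp ⟨Subtype.val, continuous_subtype_val⟩).comp (f.restrictPreimage U) := rfl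
  exact .of_homotopic hι.symm (hfactor ▸ (hU.comp_right g).comp_left _)

end

/-- if `Y` dominates `X` via `f : X → Y`, `g : Y → X`, `g ∘ f ≃ id`, then the
preimage under `f` of an open set contractible in `Y` is open and contractible in `X`. -/
theorem preimage_contractible_of_dominates {X Y : Type*}
    [TopologicalSpace X] [TopologicalSpace Y]
    (f : C(X, Y)) (g : C(Y, X)) (hgf : (g.comp f).Homotopic (ContinuousMap.id X))
    (U : Set Y) (hU : IsOpen U) (hUc : ContractibleIn U) :
    IsOpen (f ⁻¹' U) ∧ ContractibleIn (f ⁻¹' U) :=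
  ⟨hU.preimage f.continuous, hUc.preimage_of_comp_homotopic_id hgf⟩
end

section
/- For any topological space X on which ν_LS satisfies axiom (iii) (for every A there is an open U ⊇ A with ν_LS(A) = ν_LS(U)): (a) ν_LS(A) = ν_LS(cl(A)) for every subset A; (b) ν_H(A) ≤ ν_LS(A) for every subset A. -/
open Set

noncomputable def coverNum {X : Type*} [TopologicalSpace X] (T : Set (Set X)) (A : Set X) : ℕ∞ :=
  sInf {n : ℕ∞ | ∃ F : Finset (Set X), (F.card : ℕ∞) = n ∧ ↑F ⊆ T ∧ A ⊆ ⋃₀ ↑F}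

noncomputable def nuH (M : Type*) [TopologicalSpace M] : Set M → ℕ∞ :=
  coverNum {U : Set M | IsOpen U ∧ ContractibleIn U}

noncomputable def nuLS (M : Type*) [TopologicalSpace M] : Set M → ℕ∞ :=
  coverNum {C : Set M | IsClosed C ∧ ContractibleIn C}

/-! A closed contractible set `C` has `ν_LS(C) ≤ 1`, so axiom (iii) gives an open `U ⊇ C` with
`ν_LS(U) ≤ 1`: `U` lies inside a single contractible set and is therefore itself contractible.
Thickening each member of a closed categorical cover this way yields an open one, whence
`ν_H ≤ ν_LS`. The closure statement only needs that a finite union of closed sets is closed. -/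

section coverNum

variable {X : Type*} [TopologicalSpace X] {S T : Set (Set X)} {A B : Set X}

lemma coverNum_le_card (F : Finset (Set X)) (hFT : ↑F ⊆ T) (hAF : A ⊆ ⋃₀ ↑F) :
    coverNum T A ≤ F.card :=
  sInf_le ⟨F, rfl, hFT, hAF⟩

lemma coverNum_mono (h : A ⊆ B) : coverNum T A ≤ coverNum T B :=
  sInf_le_sInf fun _ ⟨F, hcard, hFT, hBF⟩ => ⟨F, hcard, hFT, h.trans hBF⟩

lemma coverNum_le_one_of_mem (hA : A ∈ T) : coverNum T A ≤ 1 := by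
  classical
  simpa using coverNum_le_card (T := T) {A} (by simpa using hA) (by simp)

lemma eq_empty_or_exists_superset_of_coverNum_le_one (h : coverNum T A ≤ 1) :
    A = ∅ ∨ ∃ D ∈ T, A ⊆ D := by
  obtain ⟨_, ⟨F, rfl, hFT, hAF⟩, hlt⟩ :=
    sInf_lt_iff.mp (h.trans_lt (by norm_num : (1 : ℕ∞) < 2))
  have hcard : F.card ≤ 1 := Nat.lt_succ_iff.mp (by exact_mod_cast hlt)
  rcases Finset.card_le_one_iff_subset_singleton.mp hcard with ⟨D, hFD⟩
  rcases Finset.subset_singleton_iff.mp hFD with rfl | rfl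
  · left; simpa using hAF
  · right; exact ⟨D, hFT (by simp), by simpa using hAF⟩

lemma coverNum_le_coverNum_of_forall_exists_superset (h : ∀ C ∈ T, ∃ V ∈ S, C ⊆ V) :
    coverNum S A ≤ coverNum T A := by
  classical
  refine le_sInf ?_
  rintro _ ⟨F, rfl, hFT, hAF⟩
  choose! V hVS hCV using fun C hC => h C (hFT hC)
  calc coverNum S A ≤ (F.image V).card := by
        refine coverNum_le_card _ (by rw [Finset.coe_image]; exact image_subset_iff.mpr hVS)
          fun x hx => ?_
        obtain ⟨C, hC, hxC⟩ := hAF hx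
        exact ⟨V C, by simpa using ⟨C, hC, rfl⟩, hCV C hC hxC⟩
    _ ≤ F.card := by exact_mod_cast F.card_image_le

lemma coverNum_closure (hT : ∀ C ∈ T, IsClosed C) : coverNum T (closure A) = coverNum T A := by
  refine le_antisymm (le_sInf ?_) (coverNum_mono subset_closure)
  rintro _ ⟨F, rfl, hFT, hAF⟩
  refine coverNum_le_card F hFT (closure_minimal hAF ?_)
  rw [sUnion_eq_biUnion]
  exact F.finite_toSet.isClosed_biUnion fun C hC => hT C (hFT hC)

end coverNum

lemma ContractibleIn.mono {X : Type*} [TopologicalSpace X] {B D : Set X} (hD : ContractibleIn D)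
    (h : B ⊆ D) : ContractibleIn B := by
  obtain ⟨c, hc⟩ := hD
  exact ⟨c, hc.comp (ContinuousMap.Homotopic.refl ⟨inclusion h, continuous_inclusion h⟩)⟩

lemma ContractibleIn.of_empty {X : Type*} [TopologicalSpace X] {A : Set X} (hA : A = ∅) (c : X) :
    ContractibleIn A := by
  subst hA
  refine ⟨c, ?_⟩
  rw [show (⟨Subtype.val, continuous_subtype_val⟩ : C((∅ : Set X), X)) = ContinuousMap.const _ c
    from ContinuousMap.ext fun a => absurd a.2 (notMem_empty _)]

lemma exists_isOpen_contractibleIn_superset {X : Type*} [TopologicalSpace X] {C : Set X}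
    (hC : IsClosed C ∧ ContractibleIn C)
    (hiii : ∃ U : Set X, IsOpen U ∧ C ⊆ U ∧ nuLS X C = nuLS X U) :
    ∃ V, (IsOpen V ∧ ContractibleIn V) ∧ C ⊆ V := by
  obtain ⟨U, hU, hCU, hEq⟩ := hiii
  have hU_le : nuLS X U ≤ 1 := hEq ▸ coverNum_le_one_of_mem hC
  obtain ⟨c, -⟩ := hC.2
  refine ⟨U, ⟨hU, ?_⟩, hCU⟩
  rcases eq_empty_or_exists_superset_of_coverNum_le_one hU_le with hU_empty | ⟨D, hD, hUD⟩
  · exact ContractibleIn.of_empty hU_empty c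
  · exact hD.2.mono hUD

/-- if `ν_LS` satisfies axiom (iii) on `X`, then (a) `ν_LS(A) = ν_LS(cl A)`
and (b) `ν_H(A) ≤ ν_LS(A)` for every subset `A`. -/
theorem nuLS_closure_and_nuH_le {X : Type*} [TopologicalSpace X]
    (hiii : ∀ A : Set X, ∃ U : Set X, IsOpen U ∧ A ⊆ U ∧ nuLS X A = nuLS X U) :
    (∀ A : Set X, nuLS X A = nuLS X (closure A)) ∧
    (∀ A : Set X, nuH X A ≤ nuLS X A) :=
  ⟨fun _ => (coverNum_closure fun _ hC => hC.1).symm,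
    fun _ => coverNum_le_coverNum_of_forall_exists_superset fun C hC =>
      exists_isOpen_contractibleIn_superset hC (hiii C)⟩
end

section
/- Let f : X → Y be continuous such that f* : H^k(Y) → H^k(X) is surjective for all k > 0. Then for every A ⊆ X, cuplength(A, X) ≤ cuplength(f(A), Y). In particular, if A is such that f(A) is cohomologically trivial in Y, then A is cohomologically trivial in X. -/
open Set

/-- An abstract (singular-type) cohomology theory with cup products on topological
spaces: graded groups `H n X`, contravariant functorial maps, and a natural,
additive-zero-preserving cup product. This records the formal structure of singular
cohomology with coefficients in a commutative ring. -/
structure CohTheory : Type 1 where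
  H : ℕ → (X : Type) → [TopologicalSpace X] → Type
  instZero : ∀ (n : ℕ) (X : Type) [TopologicalSpace X], Zero (H n X)
  map : ∀ (n : ℕ) {X Y : Type} [TopologicalSpace X] [TopologicalSpace Y],
    C(X, Y) → H n Y → H n X
  cup : ∀ {i j : ℕ} {X : Type} [TopologicalSpace X], H i X → H j X → H (i + j) X
  map_id : ∀ (n : ℕ) (X : Type) [TopologicalSpace X] (a : H n X),
    map n (ContinuousMap.id X) a = a
  map_comp : ∀ (n : ℕ) {X Y Z : Type} [TopologicalSpace X] [TopologicalSpace Y]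
    [TopologicalSpace Z] (f : C(X, Y)) (g : C(Y, Z)) (a : H n Z),
    map n (g.comp f) a = map n f (map n g a)
  map_cup : ∀ {i j : ℕ} {X Y : Type} [TopologicalSpace X] [TopologicalSpace Y]
    (f : C(X, Y)) (a : H i Y) (b : H j Y),
    map (i + j) f (cup a b) = cup (map i f a) (map j f b)
  map_zero : ∀ (n : ℕ) {X Y : Type} [TopologicalSpace X] [TopologicalSpace Y]
    (f : C(X, Y)), map n f (instZero n Y).zero = (instZero n X).zero
  homotopy_invariant : ∀ (n : ℕ) {X Y : Type} [TopologicalSpace X] [TopologicalSpace Y]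
    (f g : C(X, Y)), f.Homotopic g → map n f = map n g

attribute [instance] CohTheory.instZero

/-- The inclusion of a subset as a continuous map. -/
def inclMap {Z : Type} [TopologicalSpace Z] (A : Set Z) : C(A, Z) :=
  ⟨Subtype.val, continuous_subtype_val⟩

/-- `A` is cohomologically trivial in `Z`: restriction `H^k(Z) → H^k(A)` vanishes for `k > 0`. -/
def CohTrivial (h : CohTheory) {Z : Type} [TopologicalSpace Z] (A : Set Z) : Prop :=
  ∀ k : ℕ, 0 < k → ∀ α : h.H k Z, h.map k (inclMap A) α = 0

/-- Iterated cup product of `N + 1` classes of degrees `k i`. -/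
noncomputable def cupProd (h : CohTheory) {Z : Type} [TopologicalSpace Z] :
    (N : ℕ) → (k : Fin (N + 1) → ℕ) → ((i : Fin (N + 1)) → h.H (k i) Z) →
      h.H (∑ i, k i) Z
  | 0, k, α => cast (congrArg (fun m => h.H m Z) (Fin.sum_univ_one k).symm) (α 0)
  | N + 1, k, α =>
      cast (congrArg (fun m => h.H m Z) (Fin.sum_univ_castSucc k).symm)
        (h.cup (cupProd h N (fun i => k i.castSucc) (fun i => α i.castSucc))
          (α (Fin.last (N + 1))))

/-- The cup length of `A` in `Z`: the minimal `N ≥ 1` such that every `N`-fold cup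
product of positive-degree classes of `H*(Z)` restricts to zero on `A`. -/
noncomputable def cupLength (h : CohTheory) {Z : Type} [TopologicalSpace Z] (A : Set Z) : ℕ∞ :=
  sInf {n : ℕ∞ | ∃ N : ℕ, n = (N : ℕ∞) + 1 ∧
    ∀ (k : Fin (N + 1) → ℕ) (α : (i : Fin (N + 1)) → h.H (k i) Z),
      (∀ i, 0 < k i) → h.map _ (inclMap A) (cupProd h N k α) = 0}

lemma map_cast (h : CohTheory) {m m' : ℕ} (e : m = m') {X Y : Type}
    [TopologicalSpace X] [TopologicalSpace Y] (g : C(X, Y)) (a : h.H m Y) :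
    h.map m' g (cast (congrArg (fun n => h.H n Y) e) a) =
      cast (congrArg (fun n => h.H n X) e) (h.map m g a) := by
  subst e; rfl

lemma cupProd_map (h : CohTheory) {X Y : Type} [TopologicalSpace X] [TopologicalSpace Y]
    (g : C(X, Y)) :
    ∀ (N : ℕ) (k : Fin (N + 1) → ℕ) (β : (i : Fin (N + 1)) → h.H (k i) Y),
      h.map (∑ i, k i) g (cupProd h N k β) =
        cupProd h N k (fun i => h.map (k i) g (β i)) := by
  intro N
  induction N with
  | zero =>
    intro k β
    simp only [cupProd]
    rw [map_cast (e := (Fin.sum_univ_one k).symm)]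
  | succ N ih =>
    intro k β
    simp only [cupProd]
    rw [map_cast (e := (Fin.sum_univ_castSucc k).symm), h.map_cup, ih]

/-- The corestriction `A → f '' A`. -/
def corest {X Y : Type} [TopologicalSpace X] [TopologicalSpace Y] (f : C(X, Y)) (A : Set X) :
    C(A, f '' A) :=
  ⟨fun a => ⟨f a, ⟨a, a.2, rfl⟩⟩, Continuous.subtype_mk (f.continuous.comp continuous_subtype_val) _⟩

lemma incl_comm {X Y : Type} [TopologicalSpace X] [TopologicalSpace Y] (f : C(X, Y)) (A : Set X) :
    f.comp (inclMap A) = (inclMap (f '' A)).comp (corest f A) := rfl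

lemma restrict_eq_zero (h : CohTheory) {X Y : Type} [TopologicalSpace X] [TopologicalSpace Y]
    (f : C(X, Y)) (A : Set X) (n : ℕ) (β : h.H n Y)
    (hz : h.map n (inclMap (f '' A)) β = 0) :
    h.map n (inclMap A) (h.map n f β) = 0 := by
  rw [← h.map_comp, incl_comm, h.map_comp, hz]
  exact h.map_zero n _

/-- if `f* : H^k(Y) → H^k(X)` is surjective for all `k > 0`, then
`cuplength(A, X) ≤ cuplength(f(A), Y)` for every `A ⊆ X`; in particular if `f(A)` is
cohomologically trivial in `Y` then `A` is cohomologically trivial in `X`. -/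
theorem cupLength_le_of_surjective (h : CohTheory) {X Y : Type}
    [TopologicalSpace X] [TopologicalSpace Y] (f : C(X, Y))
    (hsurj : ∀ k : ℕ, 0 < k → Function.Surjective (h.map k f)) :
    (∀ A : Set X, cupLength h A ≤ cupLength h (f '' A)) ∧
    (∀ A : Set X, CohTrivial h (f '' A) → CohTrivial h A) := by
  constructor
  · intro A
    apply sInf_le_sInf
    rintro n ⟨N, rfl, hprop⟩
    refine ⟨N, rfl, fun k α hk => ?_⟩
    choose β hβ using fun i => hsurj (k i) (hk i) (α i)
    have hα : α = fun i => h.map (k i) f (β i) := funext fun i => (hβ i).symm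
    rw [hα, ← cupProd_map]
    exact restrict_eq_zero h f A _ _ (hprop k β hk)
  · intro A hA k hk α
    obtain ⟨β, rfl⟩ := hsurj k hk α
    exact restrict_eq_zero h f A k β (hA k hk β)
end
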